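/- Let π and ϱ be matchings on a finite set C, and let C = C₁ ∪ C₂ be a well coloring (every 2-cycle of π and of ϱ has one endpoint in each part). Define μ on C by μ(c) = π(c) if c ∈ C₁ and μ(c) = ϱ(c) if c ∈ C₂. Then μ is a permutation of C and μ⁻¹·π·μ = ϱ. -/

import Mathlib

/-!
On `C₁` the knot `μ` is `π`, which moves into `C₂`, and on `C₂` it is `ϱ`, which moves into `C₁`.
Since `π` and `ϱ` are involutions, the map that is `ϱ` on `C₁` and `π` on `C₂` undoes `μ` from
either side, so `μ` is a permutation; and checking on each colour class gives `π ∘ μ = μ ∘ ϱ`.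
-/

open Function

section

variable {α : Type*} {π ϱ : α → α} {s : Set α} [DecidablePred (· ∈ s)]

/-- For matchings `π`, `ϱ`, a well coloring `C₁ ⊔ C₂` is a set `C₁` exchanged by both. -/
def Exchanges (f : α → α) (s : Set α) : Prop :=
  ∀ c, c ∈ s ↔ f c ∉ s

theorem piecewise_swap_piecewise (hπ : Involutive π) (hϱ : Involutive ϱ)
    (hπs : Exchanges π s) (hϱs : Exchanges ϱ s) (c : α) :
    s.piecewise ϱ π (s.piecewise π ϱ c) = c := by
  by_cases hc : c ∈ s
  · have hπc : π c ∉ s := (hπs c).1 hc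
    rw [Set.piecewise_eq_of_mem s π ϱ hc, Set.piecewise_eq_of_notMem s ϱ π hπc, hπ c]
  · have hϱc : ϱ c ∈ s := not_not.1 (mt (hϱs c).2 hc)
    rw [Set.piecewise_eq_of_notMem s π ϱ hc, Set.piecewise_eq_of_mem s ϱ π hϱc, hϱ c]

def knot (hπ : Involutive π) (hϱ : Involutive ϱ) (hπs : Exchanges π s) (hϱs : Exchanges ϱ s) :
    Equiv.Perm α where
  toFun := s.piecewise π ϱ
  invFun := s.piecewise ϱ π
  left_inv := piecewise_swap_piecewise hπ hϱ hπs hϱs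
  right_inv := piecewise_swap_piecewise hϱ hπ hϱs hπs

theorem semiconj_piecewise (hπ : Involutive π) (hϱ : Involutive ϱ) (hϱs : Exchanges ϱ s) :
    Semiconj (s.piecewise π ϱ) ϱ π := by
  intro c
  by_cases hc : c ∈ s
  · have hϱc : ϱ c ∉ s := (hϱs c).1 hc
    rw [Set.piecewise_eq_of_mem s π ϱ hc, Set.piecewise_eq_of_notMem s π ϱ hϱc, hπ c, hϱ c]
  · have hϱc : ϱ c ∈ s := not_not.1 (mt (hϱs c).2 hc)
    rw [Set.piecewise_eq_of_notMem s π ϱ hc, Set.piecewise_eq_of_mem s π ϱ hϱc]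

end

theorem knot_exists_general {C : Type*}
    (π ϱ : Equiv.Perm C)
    (hπinv : π * π = 1)
    (hϱinv : ϱ * ϱ = 1)
    (C₁ : Set C)
    (hπcol : ∀ c : C, c ∈ C₁ ↔ π c ∉ C₁)
    (hϱcol : ∀ c : C, c ∈ C₁ ↔ ϱ c ∉ C₁) :
    ∃ μ : Equiv.Perm C,
      (∀ c ∈ C₁, μ c = π c) ∧ (∀ c ∉ C₁, μ c = ϱ c) ∧ μ⁻¹ * π * μ = ϱ := by
  classical
  have hπ : Involutive π := fun c => DFunLike.congr_fun hπinv c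
  have hϱ : Involutive ϱ := fun c => DFunLike.congr_fun hϱinv c
  let μ := knot hπ hϱ hπcol hϱcol
  refine ⟨μ, fun c hc => Set.piecewise_eq_of_mem _ _ _ hc,
    fun c hc => Set.piecewise_eq_of_notMem _ _ _ hc, ?_⟩
  rw [mul_assoc, inv_mul_eq_iff_eq_mul]
  exact Equiv.ext fun c => (semiconj_piecewise hπ hϱ hϱcol c).symm

/-- Given matchings `π`, `ϱ` and a well coloring `C₁`, the map equal to `π` on `C₁`
and to `ϱ` outside `C₁` is a permutation `μ` (the knot) and `μ⁻¹ * π * μ = ϱ`. -/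
theorem knot_exists {C : Type*} [Fintype C] [DecidableEq C]
    (π ϱ : Equiv.Perm C)
    (hπinv : π * π = 1) (hπfpf : ∀ c : C, π c ≠ c)
    (hϱinv : ϱ * ϱ = 1) (hϱfpf : ∀ c : C, ϱ c ≠ c)
    (C₁ : Set C)
    (hπcol : ∀ c : C, c ∈ C₁ ↔ π c ∉ C₁)
    (hϱcol : ∀ c : C, c ∈ C₁ ↔ ϱ c ∉ C₁) :
    ∃ μ : Equiv.Perm C,
      (∀ c ∈ C₁, μ c = π c) ∧ (∀ c ∉ C₁, μ c = ϱ c) ∧ μ⁻¹ * π * μ = ϱ :=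
  knot_exists_general π ϱ hπinv hϱinv C₁ hπcol hϱcol
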